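/- Fix integers n ≥ 4 and g ≥ 2. Consider all n-tuples of rationals u₁ < u₂ < ⋯ < u_n such that each u_i is a half-odd-integer (u_i ∈ ℤ + 1/2), all successive differences u_{i+1} − u_i are integers, u₁ + u₂ > 0, and u_{n−1} + u_n < 2n. Then the sum over all such tuples U of (4·(2n)^n / Π_{2n}(U))^{g−1} equals 2^{3g−1}. -/

import Mathlib

/-- The function `f_k(r) = 4 sin²(rπ/k)`. -/
noncomputable def f (k : ℕ) (r : ℝ) : ℝ := 4 * Real.sin (r * Real.pi / k) ^ 2

/-- `Π_k(U) = ∏_{1 ≤ i < j ≤ n} f_k(u_i - u_j) f_k(u_i + u_j)` for a tuple `u` of rationals. -/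
noncomputable def Pi (k n : ℕ) (u : Fin n → ℚ) : ℝ :=
  ∏ i : Fin n, ∏ j ∈ Finset.univ.filter (fun j => i < j),
    f k ((u i : ℝ) - (u j : ℝ)) * f k ((u i : ℝ) + (u j : ℝ))

/-!
Every admissible tuple is obtained from `ρ = (1/2, 3/2, …, n - 1/2)` by possibly replacing `u₁`
by `-u₁` and `u_n` by `2n - u_n`: the bounds `u₁ + u₂ > 0`, `u_{n-1} + u_n < 2n` squeeze
`u₂ = 3/2` and `u_{n-1} = n - 3/2`, which pins down everything in between. These are affine
reflections for the period `2n` of `f_{2n}`, under which each pair factor of `Π_{2n}` is invariant,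
so all four terms equal `4 (2n)^n / Π_{2n}(ρ)`. Grouping the pairs `i < j` by `j` gives
`Π_{2n}(ρ) = ∏_j f(1) ⋯ f(2j)`, and since `∏_{m=1}^{2n-1} f_{2n}(m) = |∏ (1 - ζ^m)|² = (2n)²` for a
primitive `2n`-th root of unity `ζ`, pairing `j` with `n - 1 - j` yields `Π_{2n}(ρ) = (2n)^n / 2`.
Hence every term is `8^{g-1}` and the sum is `4 · 8^{g-1} = 2^{3g-1}`.
-/

open Real Finset

lemma f_nonneg (k : ℕ) (r : ℝ) : 0 ≤ f k r := by
  unfold f; positivity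

lemma f_neg (k : ℕ) (r : ℝ) : f k (-r) = f k r := by
  simp only [f, neg_mul, neg_div, sin_neg, neg_sq]

lemma f_sub_left (k : ℕ) (r : ℝ) : f k (k - r) = f k r := by
  rcases eq_or_ne k 0 with rfl | hk
  · simp [f]
  · have hk' : (k : ℝ) ≠ 0 := Nat.cast_ne_zero.2 hk
    rw [f, f, show (k - r) * π / k = π - r * π / k by field_simp, sin_pi_sub]

lemma f_two_mul (k : ℕ) (r : ℝ) : f (2 * k) (2 * r) = f k r := by
  simp only [f]; push_cast; ring_nf

lemma f_natCast_eq_norm_sq (k m : ℕ) :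
    f k m = ‖1 - Complex.exp (2 * π * Complex.I / k) ^ m‖ ^ 2 := by
  rw [← Complex.exp_nat_mul, norm_sub_rev,
    show (m : ℂ) * (2 * π * Complex.I / k) = Complex.I * ((2 * (m * π / k) : ℝ) : ℂ) by
      push_cast; ring,
    Complex.norm_exp_I_mul_ofReal_sub_one, Real.norm_eq_abs, sq_abs, f]
  ring_nf

/-- Squared norm of `∏_{m=1}^{N} (1 - ζ^m) = N + 1`, `ζ` a primitive `(N+1)`-th root of unity. -/
lemma prod_range_f (N : ℕ) :
    ∏ m ∈ range N, f (N + 1) (m + 1) = ((N : ℝ) + 1) ^ 2 := by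
  have hζ := (Complex.isPrimitiveRoot_exp (N + 1) N.succ_ne_zero).prod_one_sub_pow_eq_order
  have := congrArg (‖·‖ ^ 2) hζ
  simp only [norm_prod, ← prod_pow] at this
  rw [show ‖(N : ℂ) + 1‖ = N + 1 by exact_mod_cast Complex.norm_natCast (N + 1)] at this
  rw [← this]
  refine prod_congr rfl fun m _ => ?_
  exact_mod_cast f_natCast_eq_norm_sq (N + 1) (m + 1)

lemma prod_fin_lt_eq_prod_range {M : Type*} [CommMonoid M] (n : ℕ) (G : ℕ → ℕ → M) :
    ∏ i : Fin n, ∏ j ∈ univ.filter (fun j => i < j), G i j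
      = ∏ j ∈ range n, ∏ i ∈ range j, G i j := by
  rw [prod_comm' (t' := univ) (s' := fun j => univ.filter (· < j)) (by simp),
    ← Fin.prod_univ_eq_prod_range (fun j => ∏ i ∈ range j, G i j)]
  refine prod_congr rfl fun j _ => ?_
  rw [filter_gt_eq_Iio, ← Nat.Iio_eq_range, ← Fin.map_valEmbedding_Iio, prod_map]
  rfl

noncomputable def partialProd (k t : ℕ) : ℝ := ∏ m ∈ range t, f k (m + 1)

lemma partialProd_succ (k t : ℕ) : partialProd k (t + 1) = partialProd k t * f k (t + 1) := by
  rw [partialProd, partialProd, prod_range_succ]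

lemma partialProd_nonneg (k t : ℕ) : 0 ≤ partialProd k t :=
  prod_nonneg fun _ _ => f_nonneg _ _

lemma partialProd_mul_partialProd {k a b : ℕ} (h : a + b + 1 = k) :
    partialProd k a * partialProd k b = (k : ℝ) ^ 2 := by
  induction b generalizing a with
  | zero =>
    subst h
    simp [partialProd, prod_range_f]
  | succ b ih =>
    have hf : f k ((b : ℝ) + 1) = f k ((a : ℝ) + 1) := by
      rw [← f_sub_left k ((a : ℝ) + 1)]
      congr 1
      rw [← h]; push_cast; ring
    rw [partialProd_succ, hf, ← ih (a := a + 1) (by omega), partialProd_succ]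
    ring

lemma partialProd_two_mul (k t : ℕ) :
    partialProd k (2 * t) = (∏ j ∈ range t, f k (2 * j + 1)) * ∏ j ∈ range t, f k (2 * j + 2) := by
  induction t with
  | zero => simp [partialProd]
  | succ t ih =>
    rw [show 2 * (t + 1) = 2 * t + 1 + 1 by ring, partialProd_succ, partialProd_succ, ih,
      prod_range_succ, prod_range_succ]
    push_cast; ring_nf

lemma prod_range_f_odd (m : ℕ) :
    ∏ j ∈ range (m + 1), f (2 * (m + 1)) (2 * j + 1) = 4 := by
  have hfull := partialProd_mul_partialProd (k := 2 * (m + 1)) (a := 2 * m + 1) (b := 0) (by ring)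
  have heven : ∏ j ∈ range m, f (2 * (m + 1)) (2 * j + 2) = ((m : ℝ) + 1) ^ 2 := by
    rw [← prod_range_f m]
    refine prod_congr rfl fun j _ => ?_
    rw [show (2 * j + 2 : ℝ) = 2 * (j + 1) by ring, f_two_mul]
  rw [partialProd_succ, partialProd_two_mul, heven, partialProd, prod_range_zero, mul_one] at hfull
  rw [prod_range_succ]
  have hm : ((m : ℝ) + 1) ^ 2 ≠ 0 := by positivity
  apply mul_right_cancel₀ hm
  push_cast at hfull
  linear_combination hfull

/-- For `ρ_i = i + 1/2` these are the factors `f_k(ρ_i - ρ_j) f_k(ρ_i + ρ_j)`, `i < j`: the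
differences supply `f_k(1), …, f_k(j)` and the sums `f_k(j + 1), …, f_k(2j)`. -/
lemma prod_range_pair_eq_partialProd (k j : ℕ) :
    ∏ i ∈ range j, f k ((i : ℝ) - j) * f k (i + j + 1) = partialProd k (2 * j) := by
  rw [prod_mul_distrib, partialProd, two_mul, prod_range_add, ← prod_range_reflect _ j]
  congr 1 <;> refine prod_congr rfl fun i hi => ?_
  · rw [← f_neg]
    congr 1
    have := mem_range.1 hi
    push_cast [Nat.sub_sub, Nat.cast_sub (by omega : 1 + i ≤ j)]
    ring
  · congr 1; push_cast; ring

lemma prod_partialProd_two_mul {n : ℕ} (hn : n ≠ 0) :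
    ∏ j ∈ range n, partialProd (2 * n) (2 * j) = (2 * (n : ℝ)) ^ n / 2 := by
  set B := ∏ j ∈ range n, partialProd (2 * n) (2 * j)
  have hpair : ∀ j ∈ range n, partialProd (2 * n) (2 * j) * partialProd (2 * n) (2 * (n - 1 - j))
      * f (2 * n) (2 * j + 1) = (2 * (n : ℝ)) ^ 2 := by
    intro j hj
    have hj := mem_range.1 hj
    rw [mul_right_comm, show (2 * j + 1 : ℝ) = (2 * j : ℕ) + 1 by push_cast; ring,
      ← partialProd_succ, partialProd_mul_partialProd (by omega)]
    push_cast; ring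
  have hsq : B * B * 4 = ((2 * (n : ℝ)) ^ 2) ^ n := by
    obtain ⟨m, rfl⟩ := Nat.exists_eq_succ_of_ne_zero hn
    calc B * B * 4
        = ∏ j ∈ range (m + 1), partialProd (2 * (m + 1)) (2 * j)
            * partialProd (2 * (m + 1)) (2 * (m + 1 - 1 - j)) * f (2 * (m + 1)) (2 * j + 1) := by
          rw [prod_mul_distrib, prod_mul_distrib,
            prod_range_reflect (fun j => partialProd _ (2 * j)), prod_range_f_odd]
      _ = ((2 * ((m + 1 : ℕ) : ℝ)) ^ 2) ^ (m + 1) := by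
          rw [prod_congr rfl hpair, prod_const, card_range]
  have hB : 0 ≤ B := prod_nonneg fun _ _ => partialProd_nonneg _ _
  refine (pow_left_inj₀ hB (by positivity) two_ne_zero).1 ?_
  rw [← pow_mul, pow_mul'] at hsq
  linear_combination hsq / 4

noncomputable def pairFactor (k : ℕ) (a b : ℝ) : ℝ := f k (a - b) * f k (a + b)

lemma pairFactor_comm (k : ℕ) (a b : ℝ) : pairFactor k a b = pairFactor k b a := by
  rw [pairFactor, pairFactor, ← f_neg k (a - b), neg_sub, add_comm]

lemma pairFactor_neg_left (k : ℕ) (a b : ℝ) : pairFactor k (-a) b = pairFactor k a b := by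
  rw [pairFactor, pairFactor, ← f_neg k (-a - b), ← f_neg k (-a + b)]
  ring_nf

lemma pairFactor_sub_left (k : ℕ) (a b : ℝ) : pairFactor k (k - a) b = pairFactor k a b := by
  rw [pairFactor, pairFactor, ← f_sub_left k (a + b), ← f_sub_left k (a - b)]
  ring_nf

lemma pairFactor_eq_of_reflect {k : ℕ} {a a' b b' : ℝ}
    (ha : a' = a ∨ a' = -a ∨ a' = k - a) (hb : b' = b ∨ b' = -b ∨ b' = k - b) :
    pairFactor k a' b' = pairFactor k a b := by
  have left : ∀ {a a' : ℝ} (c : ℝ), (a' = a ∨ a' = -a ∨ a' = k - a) →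
      pairFactor k a' c = pairFactor k a c := by
    rintro a _ c (rfl | rfl | rfl)
    exacts [rfl, pairFactor_neg_left k a c, pairFactor_sub_left k a c]
  rw [left b' ha, pairFactor_comm, left a hb, pairFactor_comm]

lemma Pi_eq_of_reflect {k n : ℕ} {u v : Fin n → ℚ}
    (h : ∀ i, (u i : ℝ) = v i ∨ (u i : ℝ) = -v i ∨ (u i : ℝ) = k - v i) :
    Pi k n u = Pi k n v :=
  prod_congr rfl fun i _ => prod_congr rfl fun j _ => pairFactor_eq_of_reflect (h i) (h j)

def admissibleInt (n : ℕ) (b t : Bool) (i : Fin n) : ℤ :=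
  if b ∧ (i : ℕ) = 0 then -1 else if t ∧ (i : ℕ) = n - 1 then n else i

def admissibleTuple (n : ℕ) (b t : Bool) (i : Fin n) : ℚ := admissibleInt n b t i + 1 / 2

lemma Pi_admissibleTuple_false_false {n : ℕ} (hn : n ≠ 0) :
    Pi (2 * n) n (admissibleTuple n false false) = (2 * (n : ℝ)) ^ n / 2 := by
  rw [← prod_partialProd_two_mul hn,
    ← prod_congr rfl fun j _ => prod_range_pair_eq_partialProd (2 * n) j,
    ← prod_fin_lt_eq_prod_range n fun i j => f (2 * n) ((i : ℝ) - j) * f (2 * n) (i + j + 1)]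
  refine prod_congr rfl fun i _ => prod_congr rfl fun j _ => ?_
  simp only [admissibleTuple, admissibleInt, Bool.false_eq_true, false_and, if_false]
  push_cast
  congr 2 <;> ring

lemma Pi_admissibleTuple {n : ℕ} (hn : n ≠ 0) (b t : Bool) :
    Pi (2 * n) n (admissibleTuple n b t) = (2 * (n : ℝ)) ^ n / 2 := by
  rw [← Pi_admissibleTuple_false_false hn]
  refine Pi_eq_of_reflect fun i => ?_
  simp only [admissibleTuple, admissibleInt, Bool.false_eq_true, false_and, if_false]
  split_ifs with h0 h1
  · right; left; rw [h0.2]; push_cast; ring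
  · right; right; rw [h1.2]; push_cast [Nat.cast_sub (by omega : 1 ≤ n)]; ring
  · left; rfl

lemma admissibleInt_strictMono (n : ℕ) (b t : Bool) : StrictMono (admissibleInt n b t) := by
  intro i j hij
  have := Fin.lt_def.1 hij
  grind [admissibleInt]

lemma StrictMono.add_le_fin {n : ℕ} {z : Fin n → ℤ} (hz : StrictMono z) :
    ∀ (d : ℕ) (i : Fin n) (h : i + d < n), z i + d ≤ z ⟨i + d, h⟩
  | 0, i, _ => by simp
  | d + 1, i, h => by
    have := hz (show (⟨i + d, by omega⟩ : Fin n) < ⟨i + (d + 1), h⟩ from Fin.mk_lt_mk.2 (by omega))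
    have := hz.add_le_fin d i (by omega)
    push_cast
    omega

lemma exists_admissibleInt_eq {n : ℕ} (hn : 3 ≤ n) {z : Fin n → ℤ} (hz : StrictMono z)
    (hfirst : 0 ≤ z ⟨0, by omega⟩ + z ⟨1, by omega⟩)
    (hlast : z ⟨n - 2, by omega⟩ + z ⟨n - 1, by omega⟩ ≤ 2 * n - 2) :
    ∃ b t, admissibleInt n b t = z := by
  have gap : ∀ i j : Fin n, (i : ℕ) ≤ j → z i + ((j : ℕ) - (i : ℕ) : ℕ) ≤ z j := fun i j hij => by
    simpa [Nat.add_sub_cancel' hij] using hz.add_le_fin (j - i) i (by omega)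
  have h01 := gap ⟨0, by omega⟩ ⟨1, by omega⟩ (by simp)
  have h12 := gap ⟨1, by omega⟩ ⟨n - 2, by omega⟩ (by simp; omega)
  have h23 := gap ⟨n - 2, by omega⟩ ⟨n - 1, by omega⟩ (by simp; omega)
  refine ⟨decide (z ⟨0, by omega⟩ = -1), decide (z ⟨n - 1, by omega⟩ = n), funext fun i => ?_⟩
  obtain ⟨i, hi⟩ := i
  have hi1 := gap ⟨1, by omega⟩ ⟨i, hi⟩
  have hi2 := gap ⟨i, hi⟩ ⟨n - 2, by omega⟩
  simp only at h01 h12 h23 hi1 hi2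
  simp only [admissibleInt, decide_eq_true_eq]
  split_ifs with h0 h1
  · obtain rfl := h0.2; omega
  · obtain rfl := h1.2; omega
  · obtain rfl | rfl | _ : i = 0 ∨ i = n - 1 ∨ (0 < i ∧ i < n - 1) := by omega
    all_goals omega

def Admissible (n : ℕ) (hn : 2 ≤ n) (u : Fin n → ℚ) : Prop :=
  StrictMono u ∧
  (∀ i : Fin n, ∃ z : ℤ, u i = (z : ℚ) + 1 / 2) ∧
  (∀ i : ℕ, ∀ h : i + 1 < n, ∃ z : ℤ, u ⟨i + 1, h⟩ - u ⟨i, by omega⟩ = (z : ℚ)) ∧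
  0 < u ⟨0, by omega⟩ + u ⟨1, by omega⟩ ∧
  u ⟨n - 2, by omega⟩ + u ⟨n - 1, by omega⟩ < 2 * n

lemma admissible_add_half_iff {n : ℕ} (hn : 2 ≤ n) (z : Fin n → ℤ) :
    Admissible n hn (fun i => (z i : ℚ) + 1 / 2) ↔
      StrictMono z ∧ 0 ≤ z ⟨0, by omega⟩ + z ⟨1, by omega⟩ ∧
        z ⟨n - 2, by omega⟩ + z ⟨n - 1, by omega⟩ ≤ 2 * n - 2 := by
  have hmono : StrictMono (fun i => (z i : ℚ) + 1 / 2) ↔ StrictMono z :=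
    ⟨fun h _ _ hij => by exact_mod_cast (add_lt_add_iff_right _).1 (h hij),
      fun h _ _ hij => by simpa using h hij⟩
  have hfirst : (0 : ℚ) < z ⟨0, by omega⟩ + 1 / 2 + (z ⟨1, by omega⟩ + 1 / 2) ↔
      0 ≤ z ⟨0, by omega⟩ + z ⟨1, by omega⟩ := by
    rw [← Int.lt_add_one_iff, ← Int.cast_pos (R := ℚ)]
    push_cast
    ring_nf
  have hlast : (z ⟨n - 2, by omega⟩ : ℚ) + 1 / 2 + (z ⟨n - 1, by omega⟩ + 1 / 2) < 2 * n ↔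
      z ⟨n - 2, by omega⟩ + z ⟨n - 1, by omega⟩ ≤ 2 * n - 2 := by
    rw [show (2 * n : ℚ) = ((2 * n : ℤ) : ℚ) by push_cast; ring,
      show (z ⟨n - 2, by omega⟩ : ℚ) + 1 / 2 + (z ⟨n - 1, by omega⟩ + 1 / 2) =
        ((z ⟨n - 2, by omega⟩ + z ⟨n - 1, by omega⟩ + 1 : ℤ) : ℚ) by push_cast; ring,
      Int.cast_lt]
    omega
  constructor
  · rintro ⟨hu, -, -, h0, h1⟩
    exact ⟨hmono.1 hu, hfirst.1 h0, hlast.1 h1⟩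
  · rintro ⟨hz, h0, h1⟩
    exact ⟨hmono.2 hz, fun i => ⟨z i, rfl⟩,
      fun i h => ⟨z ⟨i + 1, h⟩ - z ⟨i, by omega⟩, by push_cast; ring⟩, hfirst.2 h0, hlast.2 h1⟩

lemma admissible_admissibleTuple {n : ℕ} (hn : 2 ≤ n) (b t : Bool) :
    Admissible n hn (admissibleTuple n b t) := by
  refine (admissible_add_half_iff hn _).2 ⟨admissibleInt_strictMono n b t, ?_, ?_⟩ <;>
    grind [admissibleInt]

lemma exists_admissibleTuple_eq {n : ℕ} (hn : 3 ≤ n) {u : Fin n → ℚ}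
    (hu : Admissible n (by omega) u) : ∃ b t, admissibleTuple n b t = u := by
  choose z hz using hu.2.1
  obtain rfl : u = fun i => (z i : ℚ) + 1 / 2 := funext hz
  obtain ⟨hmono, hfirst, hlast⟩ := (admissible_add_half_iff _ z).1 hu
  obtain ⟨b, t, rfl⟩ := exists_admissibleInt_eq hn hmono hfirst hlast
  exact ⟨b, t, rfl⟩

lemma admissibleTuple_injective {n : ℕ} (hn : 2 ≤ n) :
    Function.Injective fun p : Bool × Bool => admissibleTuple n p.1 p.2 := by
  rintro ⟨b, t⟩ ⟨b', t'⟩ h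
  have h0 := congrFun h ⟨0, by omega⟩
  have h1 := congrFun h ⟨n - 1, by omega⟩
  simp only [admissibleTuple, admissibleInt, add_left_inj, Int.cast_inj] at h0 h1
  cases b <;> cases b' <;> cases t <;> cases t' <;> simp at h0 h1 ⊢ <;> omega

lemma bijective_admissibleTuple {n : ℕ} (hn : 3 ≤ n) :
    Function.Bijective fun p : Bool × Bool =>
      (⟨admissibleTuple n p.1 p.2, admissible_admissibleTuple _ p.1 p.2⟩ :
        {u // Admissible n (by omega) u}) := by
  refine ⟨fun p q h => admissibleTuple_injective (by omega) (congrArg Subtype.val h), ?_⟩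
  rintro ⟨u, hu⟩
  obtain ⟨b, t, rfl⟩ := exists_admissibleTuple_eq hn hu
  exact ⟨(b, t), rfl⟩

/-- For `n ≥ 4` and `g ≥ 2`, the sum over all strictly increasing `n`-tuples of
half-odd-integers `u₁ < ⋯ < u_n` with integral successive differences, `u₁ + u₂ > 0`
and `u_{n-1} + u_n < 2n`, of `(4 (2n)^n / Π_{2n}(U))^{g-1}`, equals `2^{3g-1}`.
(This is the level-2 Verlinde number `N₂⁻(Spin_{2n})`.) -/
theorem verlinde_N2_minus_spin_even (n g : ℕ) (hn : 4 ≤ n) (hg : 2 ≤ g) :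
    ∑ᶠ (u : {u : Fin n → ℚ //
        StrictMono u ∧
        (∀ i : Fin n, ∃ z : ℤ, u i = (z : ℚ) + 1 / 2) ∧
        (∀ i : ℕ, ∀ h : i + 1 < n, ∃ z : ℤ, u ⟨i + 1, h⟩ - u ⟨i, by omega⟩ = (z : ℚ)) ∧
        0 < u ⟨0, by omega⟩ + u ⟨1, by omega⟩ ∧
        u ⟨n - 2, by omega⟩ + u ⟨n - 1, by omega⟩ < 2 * n}),
      (4 * (2 * n : ℝ) ^ n / Pi (2 * n) n u.1) ^ (g - 1)
    = 2 ^ (3 * g - 1) := by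
  have hX : (2 * n : ℝ) ^ n ≠ 0 := by positivity
  obtain ⟨g, rfl⟩ := Nat.exists_eq_add_of_le' hg
  calc _ = ∑ᶠ p : Bool × Bool,
          (4 * (2 * n : ℝ) ^ n / Pi (2 * n) n (admissibleTuple n p.1 p.2)) ^ (g + 2 - 1) :=
        (finsum_comp_equiv (Equiv.ofBijective _ (bijective_admissibleTuple (by omega)))).symm
    _ = ∑ᶠ _ : Bool × Bool, (8 : ℝ) ^ (g + 1) := by
        simp_rw [Pi_admissibleTuple (by omega : n ≠ 0)]
        congr! 2
        field_simp; norm_num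
    _ = 2 ^ (3 * (g + 2) - 1) := by
        rw [finsum_eq_sum_of_fintype, sum_const, card_univ, Fintype.card_prod, Fintype.card_bool,
          show 3 * (g + 2) - 1 = 3 * (g + 1) + 2 by omega, pow_add (2 : ℝ) _ 2, pow_mul]
        norm_num
        ring
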